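/- Consider the polynomial ring $\mathbb{R}[\sigma_{j}^{(i)} : j \in [2]^{c}]$ where $c \ge 1$, and define $G_1 = \sum_{j \in [2]^c} \mathfrak{S}_{j,2}$ and $G_2 = \sum_{j \in [2]^c} \mathfrak{S}_{j,1}$ where $\mathfrak{S}_{j,a}$ are distinct monomials indexed by $(j,a) \in [2]^c \times [2]$. Let $W$ be the linear span of the polynomials: (1) $\mathfrak{S}_{a,1} G_1$ for $a \in [2]^c$; (2) $\mathfrak{S}_{a,2} G_2$ for $a \in [2]^c$; (3) $\mathfrak{S}_{\mathbb{1},1}\mathfrak{S}_{\mathbb{1},2} - \sum_{j,k \ne \mathbb{1}} \mathfrak{S}_{j,1}\mathfrak{S}_{k,2}$. Then the common zero locus of all elements of $W$ equals $\mathbb{V}(G_1, G_2) \cup \mathbb{V}(\mathfrak{S}_{a,1} : a \in [2]^c) \cup \mathbb{V}(\mathfrak{S}_{a,2} : a \in [2]^c)$. -/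
import Mathlib


open MvPolynomial

/-- base locus lemma: with independent variables `y_{j,a}` for
`j ∈ [2]^c`, `a ∈ [2]` (here `a = 0` encodes strategy `1` and `a = 1` strategy `2`,
and `𝟙 = (1,…,1)` is encoded by the constant-`0` tuple), set
`G₁ = ∑_j y_{j,2}`, `G₂ = ∑_j y_{j,1}`, and let `W` be the span of
(1) `y_{a,1} G₁` for all `a`, (2) `y_{a,2} G₂` for all `a`, and
(3) `y_{𝟙,1} y_{𝟙,2} - ∑_{j,k ≠ 𝟙} y_{j,1} y_{k,2}`.
Then the common zero locus of `W` in affine space over `ℂ` is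
`V(G₁,G₂) ∪ V(y_{a,1} : a) ∪ V(y_{a,2} : a)`. -/
theorem stmt11 (c : ℕ) (hc : 1 ≤ c)
    (one : Fin c → Fin 2) (hone : one = fun _ => 0)
    (G1 G2 F3 : MvPolynomial ((Fin c → Fin 2) × Fin 2) ℂ)
    (hG1 : G1 = ∑ j : Fin c → Fin 2, X (j, 1))
    (hG2 : G2 = ∑ j : Fin c → Fin 2, X (j, 0))
    (hF3 : F3 = X (one, 0) * X (one, 1) -
      ∑ j ∈ Finset.univ.filter (fun j => j ≠ one),
        ∑ k ∈ Finset.univ.filter (fun k => k ≠ one), X (j, 0) * X (k, 1))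
    (W : Submodule ℂ (MvPolynomial ((Fin c → Fin 2) × Fin 2) ℂ))
    (hW : W = Submodule.span ℂ
      ({f | ∃ a : Fin c → Fin 2, f = X (a, 0) * G1} ∪
       {f | ∃ a : Fin c → Fin 2, f = X (a, 1) * G2} ∪ {F3})) :
    {p : (Fin c → Fin 2) × Fin 2 → ℂ | ∀ f ∈ W, eval p f = 0} =
      {p | eval p G1 = 0 ∧ eval p G2 = 0} ∪
      {p | ∀ a : Fin c → Fin 2, p (a, 0) = 0} ∪
      {p | ∀ a : Fin c → Fin 2, p (a, 1) = 0} := by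
  ext p
  have eg1 : eval p G1 = ∑ j : Fin c → Fin 2, p (j, 1) := by
    rw [hG1, map_sum]; simp only [eval_X]
  have eg2 : eval p G2 = ∑ j : Fin c → Fin 2, p (j, 0) := by
    rw [hG2, map_sum]; simp only [eval_X]
  have ef3 : eval p F3 = p (one, 0) * p (one, 1) -
      (∑ j ∈ Finset.univ.filter (fun j => j ≠ one), p (j, 0)) *
      (∑ k ∈ Finset.univ.filter (fun k => k ≠ one), p (k, 1)) := by
    rw [hF3, map_sub, map_mul, eval_X, eval_X, Finset.sum_mul_sum]
    rw [map_sum]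
    congr 1
    refine Finset.sum_congr rfl fun j _ => ?_
    rw [map_sum]
    refine Finset.sum_congr rfl fun k _ => ?_
    rw [map_mul, eval_X, eval_X]
  have sfilter : ∀ b : Fin 2, ∑ j ∈ Finset.univ.filter (fun j => j ≠ one), p (j, b)
      = (∑ j : Fin c → Fin 2, p (j, b)) - p (one, b) := by
    intro b
    rw [Finset.filter_ne', Finset.sum_erase_eq_sub (Finset.mem_univ one)]
  simp only [Set.mem_setOf_eq, Set.mem_union]
  constructor
  · intro h
    by_cases h2 : eval p G2 = 0
    · by_cases h1 : eval p G1 = 0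
      · exact Or.inl (Or.inl ⟨h1, h2⟩)
      · refine Or.inl (Or.inr fun a => ?_)
        have hm : (X (a, 0) * G1 : MvPolynomial ((Fin c → Fin 2) × Fin 2) ℂ) ∈ W := by
          rw [hW]; exact Submodule.subset_span (Or.inl (Or.inl ⟨a, rfl⟩))
        have := h _ hm
        rw [map_mul, eval_X] at this
        exact (mul_eq_zero.mp this).resolve_right h1
    · refine Or.inr fun a => ?_
      have hm : (X (a, 1) * G2 : MvPolynomial ((Fin c → Fin 2) × Fin 2) ℂ) ∈ W := by
        rw [hW]; exact Submodule.subset_span (Or.inl (Or.inr ⟨a, rfl⟩))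
      have := h _ hm
      rw [map_mul, eval_X] at this
      exact (mul_eq_zero.mp this).resolve_right h2
  · intro h f hf
    rw [hW] at hf
    have base : ∀ g ∈ ({f | ∃ a : Fin c → Fin 2, f = X (a, 0) * G1} ∪
        {f | ∃ a : Fin c → Fin 2, f = X (a, 1) * G2} ∪ {F3} :
        Set (MvPolynomial ((Fin c → Fin 2) × Fin 2) ℂ)), eval p g = 0 := by
      rintro g ((⟨a, rfl⟩ | ⟨a, rfl⟩) | rfl)
      · rw [map_mul, eval_X]
        rcases h with (⟨h1, h2⟩ | h0) | h1
        · rw [h1, mul_zero]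
        · rw [h0 a, zero_mul]
        · rw [eg1]
          simp only [h1]
          rw [Finset.sum_const_zero, mul_zero]
      · rw [map_mul, eval_X]
        rcases h with (⟨h1, h2⟩ | h0) | h1
        · rw [h2, mul_zero]
        · rw [eg2]
          simp only [h0]
          rw [Finset.sum_const_zero, mul_zero]
        · rw [h1 a, zero_mul]
      · rw [ef3, sfilter, sfilter]
        rcases h with (⟨h1, h2⟩ | h0) | h1
        · rw [eg1] at h1; rw [eg2] at h2
          rw [h1, h2]; ring
        · rw [h0 one]
          simp only [h0]
          rw [Finset.sum_const_zero]; ring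
        · rw [h1 one]
          simp only [h1]
          rw [Finset.sum_const_zero]; ring
    refine Submodule.span_induction base (map_zero _) (fun x y _ _ hx hy => by
      rw [map_add, hx, hy, add_zero]) (fun r x _ hx => by
      rw [smul_eval, hx, mul_zero]) hf
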